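/- Let q ∈ ℂ with 0 < |q| < 1. For r, s, r′, s′ ∈ ℕ with r + s = r′ + s′ and r ≠ r′, one has h(A^{r′} B^{s′} (B*)ˢ (A*)ʳ) = 0. (Consequently the monomials aʳ b^{s} of a fixed total degree 2l are mutually orthogonal with respect to the right inner product ⟨x,y⟩_R = conj(h(x y*)), and the normalized matrix coefficients |q|^{l}·|2l+1|_{|q|}^{1/2}·binom(2l,l+j)_{|q|²}^{1/2}·a^{l−j}b^{l+j} form an orthonormal family.) -/

import Mathlib

open scoped ComplexConjugate

noncomputable section

/-- The Hilbert space `H = ℓ²(ℕ × ℤ × ℤ)` over `ℂ`. -/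
abbrev H : Type := lp (fun _ : ℕ × ℤ × ℤ => ℂ) 2

/-- The standard orthonormal basis vectors of `H`. -/
noncomputable def e (i : ℕ × ℤ × ℤ) : H := lp.single 2 i 1

/-- The Haar state `h(x) = (1-|q|²) Σ_{n≥0} |q|^{2n} ⟨e_{n,0,0}, x e_{n,0,0}⟩`. -/
noncomputable def haar (q : ℂ) (x : H →L[ℂ] H) : ℂ :=
  (1 - (‖q‖ : ℂ) ^ 2) *
    ∑' n : ℕ, ((‖q‖ : ℂ) ^ (2 * n)) *
      inner (𝕜 := ℂ) (e (n, 0, 0)) (x (e (n, 0, 0)))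

/-- The q-Pochhammer symbol `(α; t)_n = Π_{r=0}^{n-1} (1 - α tʳ)`. -/
noncomputable def qPoch (α t : ℂ) (n : ℕ) : ℂ := ∏ r ∈ Finset.range n, (1 - α * t ^ r)

/-- The Gaussian binomial coefficient `binom(n,m)_t = (t;t)_n / ((t;t)_m (t;t)_{n-m})`. -/
noncomputable def qBinom (t : ℂ) (n m : ℕ) : ℂ :=
  qPoch t t n / (qPoch t t m * qPoch t t (n - m))

lemma e_apply (i j : ℕ × ℤ × ℤ) : (e i : ∀ _ : ℕ × ℤ × ℤ, ℂ) j = if j = i then 1 else 0 := by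
  rw [e, lp.single_apply]
  split_ifs with h
  · subst h; simp
  · simp [Pi.single_apply, h]

lemma inner_e (i : ℕ × ℤ × ℤ) (v : H) : inner (𝕜 := ℂ) (e i) v = v i := by
  rw [e, lp.inner_single_left]
  simp [RCLike.inner_apply]

lemma starA_apply (q : ℂ) (A : H →L[ℂ] H)
    (hA : ∀ (n : ℕ) (r s : ℤ), A (e (n, r, s)) =
      ((Real.sqrt (1 - ‖q‖ ^ (2 * (n + 1))) : ℝ) : ℂ) • e (n + 1, r, s))
    (n : ℕ) (r s : ℤ) :
    (star A) (e (n, r, s)) =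
      ((Real.sqrt (1 - ‖q‖ ^ (2 * n)) : ℝ) : ℂ) • e (n - 1, r, s) := by
  refine lp.ext (funext fun j => ?_)
  obtain ⟨m, r', s'⟩ := j
  have h1 : ((star A) (e (n, r, s))) (m, r', s')
      = inner (𝕜 := ℂ) (e (m, r', s')) ((star A) (e (n, r, s))) := (inner_e _ _).symm
  rw [h1, ContinuousLinearMap.star_eq_adjoint, ContinuousLinearMap.adjoint_inner_right,
    hA m r' s', inner_smul_left, inner_e]
  simp only [lp.coeFn_smul, Pi.smul_apply, e_apply, smul_eq_mul, Complex.conj_ofReal,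
    Prod.mk.injEq]
  by_cases h : m + 1 = n ∧ r' = r ∧ s' = s
  · obtain ⟨ha1, ha2, ha3⟩ := h
    subst ha2; subst ha3
    rw [if_pos ⟨ha1, rfl, rfl⟩, if_pos ⟨by omega, rfl, rfl⟩, mul_one, mul_one,
      show 2 * (m + 1) = 2 * n by omega]
  · rw [if_neg h, mul_zero]
    by_cases h2 : m = n - 1 ∧ r' = r ∧ s' = s
    · have hn : n = 0 := by
        by_contra hn
        exact h ⟨by omega, h2.2.1, h2.2.2⟩
      rw [if_pos h2, mul_one, hn]
      norm_num
    · rw [if_neg h2, mul_zero]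

lemma starB_apply (q : ℂ) (B : H →L[ℂ] H)
    (hB : ∀ (n : ℕ) (r s : ℤ), B (e (n, r, s)) = (q ^ n) • e (n, r + 1, s))
    (n : ℕ) (r s : ℤ) :
    (star B) (e (n, r, s)) = (conj (q ^ n)) • e (n, r - 1, s) := by
  refine lp.ext (funext fun j => ?_)
  obtain ⟨m, r', s'⟩ := j
  have h1 : ((star B) (e (n, r, s))) (m, r', s')
      = inner (𝕜 := ℂ) (e (m, r', s')) ((star B) (e (n, r, s))) := (inner_e _ _).symm
  rw [h1, ContinuousLinearMap.star_eq_adjoint, ContinuousLinearMap.adjoint_inner_right,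
    hB m r' s', inner_smul_left, inner_e]
  simp only [lp.coeFn_smul, Pi.smul_apply, e_apply, smul_eq_mul, Prod.mk.injEq]
  by_cases h : m = n ∧ r' + 1 = r ∧ s' = s
  · obtain ⟨ha1, ha2, ha3⟩ := h
    subst ha1; subst ha3
    rw [if_pos ⟨rfl, ha2, rfl⟩, if_pos ⟨rfl, by omega, rfl⟩]
  · rw [if_neg h, mul_zero]
    rw [if_neg (by rintro ⟨h1, h2, h3⟩; exact h ⟨h1, by omega, h3⟩), mul_zero]

lemma pow_smul_e (T : H →L[ℂ] H) (f : ℕ × ℤ × ℤ → ℕ × ℤ × ℤ)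
    (hT : ∀ i, ∃ c : ℂ, T (e i) = c • e (f i)) (k : ℕ) (i : ℕ × ℤ × ℤ) :
    ∃ c : ℂ, (T ^ k) (e i) = c • e (f^[k] i) := by
  induction k generalizing i with
  | zero => exact ⟨1, by simp⟩
  | succ k ih =>
    obtain ⟨c0, hc0⟩ := hT i
    obtain ⟨c, hc⟩ := ih (f i)
    refine ⟨c0 * c, ?_⟩
    rw [pow_succ, ContinuousLinearMap.mul_apply, hc0, map_smul, hc,
      Function.iterate_succ_apply, smul_smul]

lemma it_sa (k : ℕ) (p : ℕ × ℤ × ℤ) :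
    (fun p : ℕ × ℤ × ℤ => (p.1 - 1, p.2))^[k] p = (p.1 - k, p.2) := by
  induction k generalizing p with
  | zero => simp
  | succ k ih =>
    rw [Function.iterate_succ_apply, ih]
    simp [Nat.sub_sub, add_comm 1 k]

lemma it_sb (k : ℕ) (p : ℕ × ℤ × ℤ) :
    (fun p : ℕ × ℤ × ℤ => (p.1, p.2.1 - 1, p.2.2))^[k] p = (p.1, p.2.1 - k, p.2.2) := by
  induction k generalizing p with
  | zero => simp
  | succ k ih =>
    rw [Function.iterate_succ_apply, ih]
    refine Prod.ext rfl (Prod.ext ?_ rfl)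
    push_cast
    ring

lemma it_b (k : ℕ) (p : ℕ × ℤ × ℤ) :
    (fun p : ℕ × ℤ × ℤ => (p.1, p.2.1 + 1, p.2.2))^[k] p = (p.1, p.2.1 + k, p.2.2) := by
  induction k generalizing p with
  | zero => simp
  | succ k ih =>
    rw [Function.iterate_succ_apply, ih]
    refine Prod.ext rfl (Prod.ext ?_ rfl)
    push_cast
    ring

lemma it_a (k : ℕ) (p : ℕ × ℤ × ℤ) :
    (fun p : ℕ × ℤ × ℤ => (p.1 + 1, p.2))^[k] p = (p.1 + k, p.2) := by
  induction k generalizing p with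
  | zero => simp
  | succ k ih =>
    rw [Function.iterate_succ_apply, ih]
    simp
    omega

lemma hterm_zero (q : ℂ) (A B : H →L[ℂ] H)
    (hA : ∀ (n : ℕ) (r s : ℤ), A (e (n, r, s)) =
      ((Real.sqrt (1 - ‖q‖ ^ (2 * (n + 1))) : ℝ) : ℂ) • e (n + 1, r, s))
    (hB : ∀ (n : ℕ) (r s : ℤ), B (e (n, r, s)) = (q ^ n) • e (n, r + 1, s))
    (r s r' s' : ℕ) (hss : ((0 : ℤ) - s + s') ≠ 0) (n : ℕ) :
    inner (𝕜 := ℂ) (e (n, 0, 0))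
      ((A ^ r' * B ^ s' * (star B) ^ s * (star A) ^ r) (e (n, 0, 0))) = 0 := by
  obtain ⟨c1, hc1⟩ := pow_smul_e (star A) (fun p => (p.1 - 1, p.2))
    (fun i => ⟨_, starA_apply q A hA i.1 i.2.1 i.2.2⟩) r (n, 0, 0)
  obtain ⟨c2, hc2⟩ := pow_smul_e (star B) (fun p => (p.1, p.2.1 - 1, p.2.2))
    (fun i => ⟨_, starB_apply q B hB i.1 i.2.1 i.2.2⟩) s
    ((fun p : ℕ × ℤ × ℤ => (p.1 - 1, p.2))^[r] (n, 0, 0))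
  obtain ⟨c3, hc3⟩ := pow_smul_e B (fun p => (p.1, p.2.1 + 1, p.2.2))
    (fun i => ⟨_, hB i.1 i.2.1 i.2.2⟩) s'
    ((fun p : ℕ × ℤ × ℤ => (p.1, p.2.1 - 1, p.2.2))^[s]
      ((fun p : ℕ × ℤ × ℤ => (p.1 - 1, p.2))^[r] (n, 0, 0)))
  obtain ⟨c4, hc4⟩ := pow_smul_e A (fun p => (p.1 + 1, p.2))
    (fun i => ⟨_, hA i.1 i.2.1 i.2.2⟩) r'
    ((fun p : ℕ × ℤ × ℤ => (p.1, p.2.1 + 1, p.2.2))^[s']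
      ((fun p : ℕ × ℤ × ℤ => (p.1, p.2.1 - 1, p.2.2))^[s]
        ((fun p : ℕ × ℤ × ℤ => (p.1 - 1, p.2))^[r] (n, 0, 0))))
  simp only [ContinuousLinearMap.mul_apply]
  rw [hc1, map_smul, hc2, smul_smul, map_smul, hc3, smul_smul, map_smul, hc4, smul_smul]
  rw [it_sa, it_sb, it_b, it_a] at hc4 ⊢
  have hne2 : ((n, 0, 0) : ℕ × ℤ × ℤ) ≠ (n - r + r', (0 : ℤ) - (s : ℤ) + (s' : ℤ), 0) := by
    intro hcontra
    exact hss (congrArg (fun p : ℕ × ℤ × ℤ => p.2.1) hcontra).symm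
  rw [inner_smul_right, inner_e, e_apply, if_neg hne2, mul_zero]

/-- orthogonality of monomials of fixed total degree with respect to the
right inner product: `h(A^{r'} B^{s'} (B*)^s (A*)^r) = 0` whenever `r+s = r'+s'`, `r ≠ r'`. -/
theorem stmt7 (q : ℂ) (hq0 : 0 < ‖q‖) (hq1 : ‖q‖ < 1)
    (A B D : H →L[ℂ] H)
    (hA : ∀ (n : ℕ) (r s : ℤ), A (e (n, r, s)) =
      ((Real.sqrt (1 - ‖q‖ ^ (2 * (n + 1))) : ℝ) : ℂ) • e (n + 1, r, s))
    (hB : ∀ (n : ℕ) (r s : ℤ), B (e (n, r, s)) = (q ^ n) • e (n, r + 1, s))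
    (hD : ∀ (n : ℕ) (r s : ℤ), D (e (n, r, s)) =
      ((conj q / (‖q‖ : ℂ)) ^ (2 * r)) • e (n, r, s + 1)) :
    ∀ r s r' s' : ℕ, r + s = r' + s' → r ≠ r' →
      haar q (A ^ r' * B ^ s' * (star B) ^ s * (star A) ^ r) = 0 := by
  intro r s r' s' hsum hne
  have hss : ((0 : ℤ) - (s : ℤ) + (s' : ℤ)) ≠ 0 := by omega
  unfold haar
  simp only [hterm_zero q A B hA hB r s r' s' hss, mul_zero, tsum_zero]
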